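/- (Iniquity Theorem, cost model CF1.) Let F be a Nash equilibrium flow of a symmetric nonatomic congestion game with type-specific costs, and let each agent's total cost be cost^F(x) = S^F(x) = Σ_{e∈F(x)} f_e(q(x), c^F(e), τ_e). Then for every α > 0 such that the ex post incomes q(x) − α·cost^F(x) remain positive, the ex post income distribution (q(x) − α·cost^F(x))_{x∈[0,1]} is nondecreasing in x, and its Gini coefficient is at least the Gini coefficient of the ex ante distribution q. -/

import Mathlib

open MeasureTheory Set

/-- The Gini coefficient of an income distribution `q` on `[0,1]`. -/
noncomputable def gini (q : ℝ → ℝ) : ℝ :=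
  1 - 2 * ∫ t in (0:ℝ)..1, (∫ x in (0:ℝ)..t, q x) / (∫ x in (0:ℝ)..1, q x)

/-- The congestion of edge `e` under flow `F`. -/
noncomputable def congestion {E : Type} (F : ℝ → Finset E) (e : E) : ℝ :=
  (volume {x | x ∈ Icc (0:ℝ) 1 ∧ e ∈ F x}).toReal

/-- The path cost `S^F(x) = Σ_{e ∈ F(x)} f_e(q(x), c^F(e), τ_e)`. -/
noncomputable def pathCost {E : Type} (f : E → ℝ → ℝ → ℝ → ℝ) (q : ℝ → ℝ)
    (toll : E → ℝ) (F : ℝ → Finset E) (x : ℝ) : ℝ :=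
  ∑ e ∈ F x, f e (q x) (congestion F e) (toll e)

/-- A flow is finitary if it partitions `[0,1]` into finitely many intervals,
each mapped to a single path. -/
def Finitary {E : Type} (F : ℝ → Finset E) : Prop :=
  ∃ (k : ℕ) (a : ℕ → ℝ), 0 < k ∧ a 0 = 0 ∧ a k = 1 ∧
    (∀ i < k, a i < a (i + 1)) ∧
    ∀ i < k, ∀ b ∈ Ioc (a i) (a (i + 1)), F b = F (a (i + 1))

/-- `F` is a Nash equilibrium. -/
def IsNashEq {E : Type} (f : E → ℝ → ℝ → ℝ → ℝ) (q : ℝ → ℝ) (toll : E → ℝ)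
    (paths : Finset (Finset E)) (F : ℝ → Finset E) : Prop :=
  ∀ x ∈ Icc (0:ℝ) 1, ∀ P ∈ paths,
    pathCost f q toll F x ≤ ∑ e ∈ P, f e (q x) (congestion F e) (toll e)

/-!
Richer types can always copy the path of poorer ones and pay less on it, since edge costs
decrease with income; so at a Nash equilibrium the cost `cost^F` is antitone in the type, and the
ex post income `q - α cost^F` is monotone. The Gini coefficient compares Lorenz curves: for
`t ∈ [0,1]` the bottom `t`-fraction of a monotone `q` owns at most a `t`-share of the income, while
the bottom `t`-fraction of an antitone, nonnegative `c` bears at least a `t`-share of the total cost.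
Hence subtracting `α c` moves the Lorenz curve down, i.e. the Gini coefficient up.
-/

section Integral

lemma MonotoneOn.integral_zero_le_mul_integral_zero_one {u : ℝ → ℝ}
    (hu : MonotoneOn u (Icc 0 1)) {t : ℝ} (ht : t ∈ Icc (0:ℝ) 1) :
    ∫ x in (0:ℝ)..t, u x ≤ t * ∫ x in (0:ℝ)..1, u x := by
  have hint : ∀ a b, a ∈ Icc (0:ℝ) 1 → b ∈ Icc (0:ℝ) 1 → IntervalIntegrable u volume a b :=
    fun a b ha hb => (hu.mono (uIcc_subset_Icc ha hb)).intervalIntegrable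
  have h0 : (0:ℝ) ∈ Icc (0:ℝ) 1 := left_mem_Icc.2 zero_le_one
  have h1 : (1:ℝ) ∈ Icc (0:ℝ) 1 := right_mem_Icc.2 zero_le_one
  -- both pieces are compared with the middle value `u t`
  have hleft : ∫ x in (0:ℝ)..t, u x ≤ t * u t := by
    simpa using intervalIntegral.integral_mono_on ht.1 (hint 0 t h0 ht) intervalIntegrable_const
      fun x hx => hu ⟨hx.1, hx.2.trans ht.2⟩ ht hx.2
  have hright : (1 - t) * u t ≤ ∫ x in t..1, u x := by
    simpa using intervalIntegral.integral_mono_on ht.2 intervalIntegrable_const (hint t 1 ht h1)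
      fun x hx => hu ht ⟨ht.1.trans hx.1, hx.2⟩ hx.1
  rw [← intervalIntegral.integral_add_adjacent_intervals (hint 0 t h0 ht) (hint t 1 ht h1)]
  nlinarith [mul_le_mul_of_nonneg_left hright ht.1,
    mul_le_mul_of_nonneg_right hleft (sub_nonneg.2 ht.2)]

lemma AntitoneOn.mul_integral_zero_one_le_integral_zero {u : ℝ → ℝ}
    (hu : AntitoneOn u (Icc 0 1)) {t : ℝ} (ht : t ∈ Icc (0:ℝ) 1) :
    t * ∫ x in (0:ℝ)..1, u x ≤ ∫ x in (0:ℝ)..t, u x := by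
  have := hu.neg.integral_zero_le_mul_integral_zero_one ht
  simp only [intervalIntegral.integral_neg] at this
  linarith

end Integral

section Lorenz

noncomputable def lorenz (q : ℝ → ℝ) (t : ℝ) : ℝ :=
  (∫ x in (0:ℝ)..t, q x) / ∫ x in (0:ℝ)..1, q x

lemma gini_eq_one_sub_two_mul_integral_lorenz (q : ℝ → ℝ) :
    gini q = 1 - 2 * ∫ t in (0:ℝ)..1, lorenz q t :=
  rfl

lemma lorenz_intervalIntegrable {q : ℝ → ℝ} (hq : IntervalIntegrable q volume 0 1) :
    IntervalIntegrable (lorenz q) volume 0 1 :=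
  ((intervalIntegral.continuousOn_primitive_interval' hq left_mem_uIcc).div_const
    _).intervalIntegrable

lemma gini_le_gini_of_lorenz_le {p q : ℝ → ℝ} (hp : IntervalIntegrable p volume 0 1)
    (hq : IntervalIntegrable q volume 0 1) (h : ∀ t ∈ Icc (0:ℝ) 1, lorenz p t ≤ lorenz q t) :
    gini q ≤ gini p := by
  have := intervalIntegral.integral_mono_on zero_le_one (lorenz_intervalIntegrable hp)
    (lorenz_intervalIntegrable hq) h
  rw [gini_eq_one_sub_two_mul_integral_lorenz, gini_eq_one_sub_two_mul_integral_lorenz]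
  linarith

lemma lorenz_sub_mul_le_lorenz {q c : ℝ → ℝ} {α : ℝ} (hq : MonotoneOn q (Icc 0 1))
    (hc : AntitoneOn c (Icc 0 1)) (hα : 0 ≤ α) (hc0 : 0 ≤ ∫ x in (0:ℝ)..1, c x)
    (hpos : 0 < ∫ x in (0:ℝ)..1, (q x - α * c x)) {t : ℝ} (ht : t ∈ Icc (0:ℝ) 1) :
    lorenz (fun x => q x - α * c x) t ≤ lorenz q t := by
  have h0 : (0:ℝ) ∈ Icc (0:ℝ) 1 := left_mem_Icc.2 zero_le_one
  have hsub : ∀ s ∈ Icc (0:ℝ) 1, ∫ x in (0:ℝ)..s, (q x - α * c x) =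
      (∫ x in (0:ℝ)..s, q x) - α * ∫ x in (0:ℝ)..s, c x := fun s hs => by
    rw [intervalIntegral.integral_sub
      (hq.mono (uIcc_subset_Icc h0 hs)).intervalIntegrable
      ((hc.mono (uIcc_subset_Icc h0 hs)).intervalIntegrable.const_mul α),
      intervalIntegral.integral_const_mul]
  set μ := ∫ x in (0:ℝ)..1, q x
  set M := ∫ x in (0:ℝ)..1, c x
  rw [hsub 1 (right_mem_Icc.2 zero_le_one)] at hpos
  have hμ : 0 < μ := by nlinarith
  have hQ := hq.integral_zero_le_mul_integral_zero_one ht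
  have hC := hc.mul_integral_zero_one_le_integral_zero ht
  -- the cost share of the bottom `t`-fraction dominates its income share
  have hshares : M * ∫ x in (0:ℝ)..t, q x ≤ (∫ x in (0:ℝ)..t, c x) * μ := by
    nlinarith [mul_le_mul_of_nonneg_left hQ hc0, mul_le_mul_of_nonneg_right hC hμ.le]
  unfold lorenz
  rw [hsub t ht, hsub 1 (right_mem_Icc.2 zero_le_one), div_le_div_iff₀ hpos hμ]
  nlinarith [mul_le_mul_of_nonneg_left hshares hα]

end Lorenz

section Equilibrium

variable {E : Type} {f : E → ℝ → ℝ → ℝ → ℝ} {q : ℝ → ℝ} {toll : E → ℝ}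
  {paths : Finset (Finset E)} {F : ℝ → Finset E}

lemma pathCost_nonneg (hf : ∀ e w z t, 0 ≤ f e w z t) (x : ℝ) : 0 ≤ pathCost f q toll F x :=
  Finset.sum_nonneg fun e _ => hf e _ _ _

lemma IsNashEq.antitoneOn_pathCost (hNE : IsNashEq f q toll paths F)
    (hF : ∀ x ∈ Icc (0:ℝ) 1, F x ∈ paths) (hq : MonotoneOn q (Icc 0 1))
    (hf : ∀ e z t, Antitone fun w => f e w z t) :
    AntitoneOn (pathCost f q toll F) (Icc 0 1) := fun x hx y hy hxy =>
  calc pathCost f q toll F y ≤ ∑ e ∈ F x, f e (q y) (congestion F e) (toll e) :=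
        hNE y hy (F x) (hF x hx)
    _ ≤ pathCost f q toll F x := Finset.sum_le_sum fun e _ => hf e _ _ (hq hx hy hxy)

end Equilibrium

theorem iniquity_theorem_CF1_general
    {E : Type}
    (toll : E → ℝ)
    (paths : Finset (Finset E))
    (q : ℝ → ℝ)
    (hq_mono : MonotoneOn q (Icc 0 1))
    (f : E → ℝ → ℝ → ℝ → ℝ)
    (hf_nonneg : ∀ e w z t, 0 ≤ f e w z t)
    (hf_anti_income : ∀ e z t, ∀ w w', w ≤ w' → f e w' z t ≤ f e w z t)
    (F : ℝ → Finset E) (hF : ∀ x ∈ Icc (0:ℝ) 1, F x ∈ paths)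
    (hNE : IsNashEq f q toll paths F)
    (cst : ℝ → ℝ) (hcst : ∀ x, cst x = pathCost f q toll F x) :
    ∀ α : ℝ, 0 < α → (∀ x ∈ Icc (0:ℝ) 1, 0 < q x - α * cst x) →
      MonotoneOn (fun x => q x - α * cst x) (Icc (0:ℝ) 1) ∧
      gini q ≤ gini (fun x => q x - α * cst x) := by
  intro α hα hpos
  obtain rfl : cst = pathCost f q toll F := funext hcst
  have hcost := hNE.antitoneOn_pathCost hF hq_mono fun e z t _ _ h => hf_anti_income e z t _ _ h
  have hexpost : MonotoneOn (fun x => q x - α * pathCost f q toll F x) (Icc 0 1) :=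
    fun x hx y hy hxy => sub_le_sub (hq_mono hx hy hxy)
      (mul_le_mul_of_nonneg_left (hcost hx hy hxy) hα.le)
  have hIcc : uIcc (0:ℝ) 1 = Icc 0 1 := uIcc_of_le zero_le_one
  refine ⟨hexpost, gini_le_gini_of_lorenz_le (hIcc ▸ hexpost).intervalIntegrable
    (hIcc ▸ hq_mono).intervalIntegrable fun t ht => ?_⟩
  exact lorenz_sub_mul_le_lorenz hq_mono hcost hα.le
    (intervalIntegral.integral_nonneg zero_le_one fun x _ => pathCost_nonneg hf_nonneg x)
    (intervalIntegral.intervalIntegral_pos_of_pos_on (hIcc ▸ hexpost).intervalIntegrable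
      (fun x hx => hpos x (Ioo_subset_Icc_self hx)) zero_lt_one) ht

/-- **The Iniquity Theorem (cost model CF1).** At any Nash equilibrium of a symmetric
nonatomic congestion game with type-specific costs, with agent cost
`cost^F(x) = S^F(x)`, for every `α > 0` keeping ex post incomes positive,
the ex post income distribution `q(x) − α·cost^F(x)` is nondecreasing in `x` and its
Gini coefficient is at least the Gini coefficient of the ex ante distribution `q`. -/
theorem iniquity_theorem_CF1
    {E : Type} [Fintype E] [DecidableEq E]
    (toll : E → ℝ) (htoll : ∀ e, 0 ≤ toll e)
    (paths : Finset (Finset E)) (hpaths : paths.Nonempty)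
    (q : ℝ → ℝ) (hq_meas : Measurable q)
    (hq_mono : MonotoneOn q (Icc 0 1)) (hq0 : 0 < q 0)
    (f : E → ℝ → ℝ → ℝ → ℝ)
    (hf_nonneg : ∀ e w z t, 0 ≤ f e w z t)
    (hf_anti_income : ∀ e z t, ∀ w w', w ≤ w' → f e w' z t ≤ f e w z t)
    (hf_mono_cong : ∀ e w t, ∀ z z', z ≤ z' → f e w z t ≤ f e w z' t)
    (hf_mono_toll : ∀ e w z, ∀ t t', t ≤ t' → f e w z t ≤ f e w z t')
    (F : ℝ → Finset E) (hF : ∀ x ∈ Icc (0:ℝ) 1, F x ∈ paths)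
    (hFfin : Finitary F)
    (hNE : IsNashEq f q toll paths F)
    (cst : ℝ → ℝ) (hcst : ∀ x, cst x = pathCost f q toll F x) :
    ∀ α : ℝ, 0 < α → (∀ x ∈ Icc (0:ℝ) 1, 0 < q x - α * cst x) →
      MonotoneOn (fun x => q x - α * cst x) (Icc (0:ℝ) 1) ∧
      gini q ≤ gini (fun x => q x - α * cst x) :=
  iniquity_theorem_CF1_general toll paths q hq_mono f hf_nonneg hf_anti_income F hF hNE cst hcst
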